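/- Characterization of the interpretation of corrupted nat: for any valuation ρ and finite set Δ of exception names, ⟦{Δ}nat⟧ρ = { M | ∃n ∈ ℕ, M →* Sⁿ Φ }, where Φ is one of 0, ✠, or raise ε for some ε ∈ Δ. -/

import Mathlib

/-- Exception names (a countable set, taken to be ℕ; the fixed bijection φ
with ℕ is the identity). -/
abbrev ExnName := ℕ

/-- Terms of Fx extended with the daimon ✠ and the test construction `M; N`. -/
inductive Tm : Type
  | var : ℕ → Tm
  | lam : Tm → Tm
  | app : Tm → Tm → Tm
  | raise : ExnName → Tm
  | tryc : Tm → ExnName → Tm → Tm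
  | zero : Tm
  | succ : Tm
  | natrec : Tm
  | nil : Tm
  | cons : Tm
  | foldr : Tm
  | daimon : Tm
  | seq : Tm → Tm → Tm
  deriving DecidableEq

namespace Tm

/-- Shifting of de Bruijn indices ≥ k. -/
def lift : ℕ → Tm → Tm
  | k, var i => if i < k then var i else var (i + 1)
  | k, lam M => lam (lift (k + 1) M)
  | k, app M N => app (lift k M) (lift k N)
  | k, tryc M e N => tryc (lift k M) e (lift k N)
  | k, seq M N => seq (lift k M) (lift k N)
  | _, raise e => raise e
  | _, zero => zero
  | _, succ => succ
  | _, natrec => natrec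
  | _, nil => nil
  | _, cons => cons
  | _, foldr => foldr
  | _, daimon => daimon

/-- Capture-avoiding substitution `M[k := N]` (de Bruijn). -/
def subst : ℕ → Tm → Tm → Tm
  | k, N, var i => if i = k then N else if k < i then var (i - 1) else var i
  | k, N, lam M => lam (subst (k + 1) (lift 0 N) M)
  | k, N, app M P => app (subst k N M) (subst k N P)
  | k, N, tryc M e P => tryc (subst k N M) e (subst k N P)
  | k, N, seq M P => seq (subst k N M) (subst k N P)
  | _, _, raise e => raise e
  | _, _, zero => zero
  | _, _, succ => succ
  | _, _, natrec => natrec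
  | _, _, nil => nil
  | _, _, cons => cons
  | _, _, foldr => foldr
  | _, _, daimon => daimon

end Tm

open Tm

/-- Regular values of Fx. -/
inductive RegVal : Tm → Prop
  | lam (M) : RegVal (lam M)
  | zero : RegVal zero
  | succ : RegVal succ
  | succApp (N) : RegVal (app succ N)
  | natrec : RegVal natrec
  | natrec1 (M) : RegVal (app natrec M)
  | natrec2 (M N) : RegVal (app (app natrec M) N)
  | nil : RegVal nil
  | cons : RegVal cons
  | cons1 (M) : RegVal (app cons M)
  | cons2 (M N) : RegVal (app (app cons M) N)
  | foldr : RegVal foldr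
  | foldr1 (M) : RegVal (app foldr M)
  | foldr2 (M N) : RegVal (app (app foldr M) N)

/-- Values: regular values, exceptions and the daimon. -/
def IsVal (V : Tm) : Prop := RegVal V ∨ (∃ e, V = raise e) ∨ V = daimon

/-- The notion of reduction ▷ of Fx extended with the daimon rules. -/
inductive Head : Tm → Tm → Prop
  | beta (M N) : Head (app (lam M) N) (subst 0 N M)
  | raiseApp (e M) : Head (app (raise e) M) (raise e)
  | tryCatch (e N) : Head (tryc (raise e) e N) N
  | tryOther (e e' N) : e ≠ e' → Head (tryc (raise e') e N) (raise e')
  | tryVal (V e N) : RegVal V → Head (tryc V e N) V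
  | recZero (X Y) : Head (app (app (app natrec X) Y) zero) X
  | recSucc (X Y N) :
      Head (app (app (app natrec X) Y) (app succ N))
        (app (app Y N) (app (app (app natrec X) Y) N))
  | recRaise (X Y e) : Head (app (app (app natrec X) Y) (raise e)) (raise e)
  | foldNil (X Y) : Head (app (app (app foldr X) Y) nil) X
  | foldCons (X Y E L) :
      Head (app (app (app foldr X) Y) (app (app cons E) L))
        (app (app (app Y E) L) (app (app (app foldr X) Y) L))
  | foldRaise (X Y e) : Head (app (app (app foldr X) Y) (raise e)) (raise e)
  | daimonApp (N) : Head (app daimon N) daimon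
  | tryDaimon (e N) : Head (tryc daimon e N) daimon
  | recDaimon (X Y) : Head (app (app (app natrec X) Y) daimon) daimon
  | foldDaimon (X Y) : Head (app (app (app foldr X) Y) daimon) daimon
  | seqDaimon (N) : Head (seq daimon N) N

/-- One-step reduction: compatible closure of ▷. -/
inductive Red : Tm → Tm → Prop
  | head {M N} : Head M N → Red M N
  | appL {M M' N} : Red M M' → Red (app M N) (app M' N)
  | appR {M N N'} : Red N N' → Red (app M N) (app M N')
  | lam {M M'} : Red M M' → Red (lam M) (lam M')
  | tryL {M M' e N} : Red M M' → Red (tryc M e N) (tryc M' e N)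
  | tryR {M e N N'} : Red N N' → Red (tryc M e N) (tryc M e N')
  | seqL {M M' N} : Red M M' → Red (seq M N) (seq M' N)
  | seqR {M N N'} : Red N N' → Red (seq M N) (seq M N')

/-- Many-step reduction. -/
abbrev RedStar : Tm → Tm → Prop := Relation.ReflTransGen Red

/-- Evaluation contexts of Fx. -/
inductive Ctx : Type
  | hole : Ctx
  | appl : Ctx → Tm → Ctx
  | tryd : Ctx → ExnName → Ctx
  | recd : Tm → Tm → Ctx → Ctx
  | foldd : Tm → Tm → Ctx → Ctx

namespace Ctx

/-- Filling the hole of a context with a term. -/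
def fill : Ctx → Tm → Tm
  | hole, M => M
  | appl C N, M => Tm.app (fill C M) N
  | tryd C e, M => Tm.tryc (fill C M) e Tm.daimon
  | recd X Y C, M => Tm.app (Tm.app (Tm.app Tm.natrec X) Y) (fill C M)
  | foldd X Y C, M => Tm.app (Tm.app (Tm.app Tm.foldr X) Y) (fill C M)

/-- Composition of contexts: `(C.comp D)[M] = C[D[M]]`. -/
def comp : Ctx → Ctx → Ctx
  | hole, D => D
  | appl C N, D => appl (comp C D) N
  | tryd C e, D => tryd (comp C D) e
  | recd X Y C, D => recd X Y (comp C D)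
  | foldd X Y C, D => foldd X Y (comp C D)

end Ctx

/-- Orthogonality: `M ⊥ C` iff `C[M] →* ✠`. -/
def Perp (M : Tm) (C : Ctx) : Prop := RedStar (C.fill M) Tm.daimon

/-- The orthogonal of a set of contexts. -/
def orth (S : Set Ctx) : Set Tm := { M | ∀ C ∈ S, Perp M C }

/-- `tryCtx Δ` is the context `try (… (try □ with ε₁ ↦ ✠) …) with εₙ ↦ ✠`,
for `Δ = {ε₁, …, εₙ}` enumerated in the order given by the fixed bijection
with ℕ (ε₁ innermost); it is the empty context when `Δ = ∅`. -/
def tryCtx (Δ : Finset ExnName) : Ctx := (Δ.sort (· ≤ ·)).foldl Ctx.tryd Ctx.hole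

/-- `lift_Δ(S)`: wrap each context of `S` inside the `try_Δ` handlers
(the handlers outermost). -/
def liftS (Δ : Finset ExnName) (S : Set Ctx) : Set Ctx :=
  (fun C => (tryCtx Δ).comp C) '' S

/-- `unlift_Δ(S)`: plug the `try_Δ` handlers inside each context of `S`. -/
def unliftS (Δ : Finset ExnName) (S : Set Ctx) : Set Ctx :=
  (fun C => C.comp (tryCtx Δ)) '' S

/-- Types of Fx; `union A Δ` is `A∪{Δ}`, `corrupt Δ A` is `{Δ}A`. -/
inductive Ty : Type
  | tvar : ℕ → Ty
  | nat : Ty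
  | list : Ty → Ty
  | arrow : Ty → Ty → Ty
  | all : Ty → Ty
  | union : Ty → Finset ExnName → Ty
  | corrupt : Finset ExnName → Ty → Ty
  deriving DecidableEq

/-- Extension of a valuation by a set of contexts for the bound type
variable 0 (de Bruijn). -/
def consVal (S : Set Ctx) (ρ : ℕ → Set Ctx) : ℕ → Set Ctx
  | 0 => S
  | i + 1 => ρ i

/-- The context interpretation `⟪A⟫ρ` of a type. -/
def CtxI : Ty → (ℕ → Set Ctx) → Set Ctx
  | .tvar i, ρ => ρ i
  | .nat, _ => {Ctx.recd Tm.daimon (Tm.lam (Tm.lam (Tm.var 0))) Ctx.hole}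
  | .list A, ρ =>
      (fun C => Ctx.foldd Tm.daimon
        (Tm.lam (Tm.lam (Tm.lam (Tm.seq (Ctx.fill C (Tm.var 2)) (Tm.var 0)))))
        Ctx.hole) '' CtxI A ρ
  | .arrow A B, ρ =>
      ⋃ (Δ : Finset ExnName),
        ⋃ N ∈ orth (liftS Δ (CtxI A ρ)), ⋃ C ∈ liftS Δ (CtxI B ρ),
          {Ctx.comp C (Ctx.appl Ctx.hole N)}
  | .all A, ρ => ⋃ (S : Set Ctx), ⋃ (_ : S.Nonempty), CtxI A (consVal S ρ)
  | .union A Δ, ρ => unliftS Δ (CtxI A ρ)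
  | .corrupt Δ A, ρ => liftS Δ (CtxI A ρ)

/-- The term interpretation `⟦A⟧ρ = ⟪A⟫ρ^⊥`. -/
def TmI (A : Ty) (ρ : ℕ → Set Ctx) : Set Tm := orth (CtxI A ρ)

/-! The only context of `⟪{Δ}nat⟫ρ` is `try_Δ[natrec ✠ (λy.λx.x) □]`. Write `abort none = ✠`
and `abort (some ε) = raise ε`. Since regular values never abort, a term under a handler
`try □ with ε ↦ ✠` reduces to an abort iff the term itself does, the handler turning `raise ε`
into `✠` and letting every other abort through; so `try_Δ[T] →* ✠` iff `T` reduces to `✠` or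
to some `raise ε` with `ε ∈ Δ`.

A reduction of `natrec ✠ (λy.λx.x) M` either takes place inside `M`, or consumes one `S` of `M`
and leaves `(λy.λx.x) N (natrec ✠ (λy.λx.x) N)`, which can only go on inside the recursive
call. `NatTestState U M` records a reduct `U` together with the part `M` of the argument still
to be consumed. Hence `natrec ✠ (λy.λx.x) M` reaches an abort iff `M →* Sⁿ Φ` where `Φ = 0`
(and the abort is `✠`) or `Φ` is that abort. -/

namespace Tm

def abort : Option ExnName → Tm
  | none => daimon
  | some ε => raise ε

theorem not_red_abort (o : Option ExnName) {U : Tm} : ¬ Red (abort o) U := by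
  cases o <;> rintro ⟨⟨⟩⟩

theorem eq_abort_of_redStar {o : Option ExnName} {R : Tm} (h : RedStar (abort o) R) :
    R = abort o := by
  rcases h.cases_head with h | ⟨_, h, _⟩
  · exact h.symm
  · exact absurd h (not_red_abort o)

end Tm

theorem RegVal.red {V U : Tm} (h : RegVal V) (hr : Red V U) : RegVal U := by
  cases h <;> cases hr <;> repeat' (first | constructor | (rename_i h; cases h))

theorem RegVal.not_redStar_abort {V : Tm} (h : RegVal V) (o : Option ExnName) :
    ¬ RedStar V (abort o) := by
  intro hr
  have := hr.rec (motive := fun R _ => RegVal R) h fun _ hr ih => ih.red hr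
  cases o <;> cases this

namespace Ctx

theorem red_fill (C : Ctx) {M M' : Tm} (h : Red M M') : Red (C.fill M) (C.fill M') := by
  induction C with
  | hole => exact h
  | appl _ _ ih => exact .appL ih
  | tryd _ _ ih => exact .tryL ih
  | recd _ _ _ ih => exact .appR ih
  | foldd _ _ _ ih => exact .appR ih

theorem redStar_fill (C : Ctx) {M M' : Tm} (h : RedStar M M') :
    RedStar (C.fill M) (C.fill M') :=
  h.lift C.fill fun _ _ => C.red_fill

theorem fill_comp (C D : Ctx) (M : Tm) : (C.comp D).fill M = C.fill (D.fill M) := by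
  induction C <;> simp only [comp, fill, *]

end Ctx

theorem redStar_tryc_of_redStar {T : Tm} {o : Option ExnName} (e : ExnName)
    (h : RedStar T (abort o)) :
    RedStar (tryc T e daimon) (abort (o.filter (· ≠ e))) := by
  refine (Ctx.redStar_fill (.tryd .hole e) h).tail (.head ?_)
  rcases o with _ | ε
  · exact .tryDaimon e daimon
  · by_cases hε : ε = e
    · subst hε
      simpa [abort, Option.filter_some, Ctx.fill] using Head.tryCatch ε daimon
    · simpa [abort, Option.filter_some, Ctx.fill, hε] using Head.tryOther e ε daimon (Ne.symm hε)

theorem exists_redStar_of_redStar_tryc {T : Tm} {e : ExnName} {o' : Option ExnName}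
    (h : RedStar (tryc T e daimon) (abort o')) :
    ∃ o, RedStar T (abort o) ∧ o.filter (· ≠ e) = o' := by
  generalize hU : tryc T e daimon = U at h
  induction h using Relation.ReflTransGen.head_induction_on generalizing T with
  | refl => cases o' <;> cases hU
  | head hstep htail ih =>
    subst hU
    cases hstep with
    | head h =>
      cases h with
      | tryCatch =>
        have := eq_abort_of_redStar (o := none) htail
        exact ⟨some e, .refl, by cases o' <;> simp_all [abort]⟩
      | tryOther _ ε _ hne =>
        have := eq_abort_of_redStar (o := some ε) htail
        exact ⟨some ε, .refl, by cases o' <;> simp_all [abort, Option.filter_some, Ne.symm hne]⟩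
      | tryVal _ _ _ hV => exact absurd htail (hV.not_redStar_abort o')
      | tryDaimon =>
        have := eq_abort_of_redStar (o := none) htail
        exact ⟨none, .refl, by cases o' <;> simp_all [abort]⟩
    | tryL hT =>
      obtain ⟨o, hT', rfl⟩ := ih rfl
      exact ⟨o, .head hT hT', rfl⟩
    | tryR h => exact absurd h (not_red_abort none)

theorem redStar_tryc_abort_iff {T : Tm} {e : ExnName} {o' : Option ExnName} :
    RedStar (tryc T e daimon) (abort o') ↔
      ∃ o, RedStar T (abort o) ∧ o.filter (· ≠ e) = o' :=
  ⟨exists_redStar_of_redStar_tryc, fun ⟨_, h, ho⟩ => ho ▸ redStar_tryc_of_redStar e h⟩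

theorem redStar_foldl_tryd_fill_abort_iff (L : List ExnName) {T : Tm} {o' : Option ExnName} :
    RedStar ((L.foldl Ctx.tryd Ctx.hole).fill T) (abort o') ↔
      ∃ o, RedStar T (abort o) ∧ o.filter (· ∉ L) = o' := by
  induction L using List.reverseRecOn generalizing o' with
  | nil =>
    have (o : Option ExnName) : o.filter (fun _ => true) = o := by cases o <;> rfl
    simp [Ctx.fill, this]
  | append_singleton L a ih =>
    simp only [List.foldl_append, List.foldl_cons, List.foldl_nil, Ctx.fill,
      redStar_tryc_abort_iff, ih]
    constructor
    · rintro ⟨_, ⟨o, hT, rfl⟩, rfl⟩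
      exact ⟨o, hT, by simp [Bool.and_comm]⟩
    · rintro ⟨o, hT, rfl⟩
      exact ⟨_, ⟨o, hT, rfl⟩, by simp [Bool.and_comm]⟩

theorem redStar_tryCtx_fill_abort_iff (Δ : Finset ExnName) {T : Tm} {o' : Option ExnName} :
    RedStar ((tryCtx Δ).fill T) (abort o') ↔
      ∃ o, RedStar T (abort o) ∧ o.filter (· ∉ Δ) = o' := by
  simpa only [tryCtx, Finset.mem_sort] using redStar_foldl_tryd_fill_abort_iff (Δ.sort (· ≤ ·))

namespace Tm

abbrev kI : Tm := lam (lam (var 0))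

abbrev natTest (M : Tm) : Tm := app (app (app natrec daimon) kI) M

theorem not_red_lam_var (i : ℕ) {U : Tm} : ¬ Red (lam (var i)) U := by
  aesop (add safe cases Red, safe cases Head)

theorem not_red_kI {U : Tm} : ¬ Red kI U := by
  aesop (add safe cases Red, safe cases Head)

theorem not_red_natrec_daimon_kI {U : Tm} : ¬ Red (app (app natrec daimon) kI) U := by
  aesop (add safe cases Red, safe cases Head)

end Tm

theorem redStar_natTest_succ (N : Tm) : RedStar (natTest (app succ N)) (natTest N) := by
  have hK : Red (app kI N) (lam (var 0)) := by
    simpa [subst] using Red.head (Head.beta (lam (var 0)) N)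
  have hI : Red (app (lam (var 0)) (natTest N)) (natTest N) := by
    simpa [subst] using Red.head (Head.beta (var 0) (natTest N))
  exact .head (.head (.recSucc _ _ _)) (.head (.appL hK) (.single hI))

theorem redStar_natTest_iterate_succ (n : ℕ) (Φ : Tm) :
    RedStar (natTest ((app succ)^[n] Φ)) (natTest Φ) := by
  induction n with
  | zero => exact .refl
  | succ n ih =>
    rw [Function.iterate_succ_apply']
    exact (redStar_natTest_succ _).trans ih

inductive NatTestState : Tm → Tm → Prop
  | start (M : Tm) : NatTestState (natTest M) M
  | discard (N : Tm) {U M : Tm} : NatTestState U M → NatTestState (app (app kI N) U) M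
  | ident {U M : Tm} : NatTestState U M → NatTestState (app (lam (var 0)) U) M
  | zero : NatTestState daimon zero
  | daimon : NatTestState daimon daimon
  | raise (ε : ExnName) : NatTestState (raise ε) (raise ε)

namespace NatTestState

theorem step {U M U' : Tm} (hS : NatTestState U M) (hr : Red U U') :
    ∃ M', (RedStar M M' ∨ M = app succ M') ∧ NatTestState U' M' := by
  induction hS generalizing U' with
  | start M =>
    rcases hr with ⟨⟨⟩⟩ | ⟨hr⟩ | ⟨hr⟩
    · exact ⟨_, .inl .refl, .zero⟩
    · exact ⟨_, .inr rfl, .discard _ (.start _)⟩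
    · exact ⟨_, .inl .refl, .raise _⟩
    · exact ⟨_, .inl .refl, .daimon⟩
    · exact absurd hr not_red_natrec_daimon_kI
    · exact ⟨_, .inl (.single hr), .start _⟩
  | discard N hS ih =>
    rcases hr with ⟨⟨⟩⟩ | ⟨⟨⟨⟩⟩ | ⟨hr⟩ | ⟨hr⟩⟩ | ⟨hr⟩
    · exact ⟨_, .inl .refl, by simpa [subst] using hS.ident⟩
    · exact absurd hr not_red_kI
    · exact ⟨_, .inl .refl, hS.discard _⟩
    · obtain ⟨M', hM, hS'⟩ := ih hr
      exact ⟨M', hM, hS'.discard N⟩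
  | ident hS ih =>
    rcases hr with ⟨⟨⟩⟩ | ⟨hr⟩ | ⟨hr⟩
    · exact ⟨_, .inl .refl, by simpa [subst] using hS⟩
    · exact absurd hr (not_red_lam_var 0)
    · obtain ⟨M', hM, hS'⟩ := ih hr
      exact ⟨M', hM, hS'.ident⟩
  | zero | daimon => exact absurd hr (not_red_abort none)
  | raise ε => exact absurd hr (not_red_abort (some ε))

theorem redStar_abort {U M : Tm} {o : Option ExnName} (hS : NatTestState U M)
    (h : RedStar U (abort o)) :
    ∃ n Φ, RedStar M ((app succ)^[n] Φ) ∧ (Φ = Tm.zero ∧ o = none ∨ Φ = abort o) := by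
  induction h using Relation.ReflTransGen.head_induction_on generalizing M with
  | refl =>
    cases o <;> cases hS
    · exact ⟨0, _, .refl, .inl ⟨rfl, rfl⟩⟩
    · exact ⟨0, _, .refl, .inr rfl⟩
    · exact ⟨0, _, .refl, .inr rfl⟩
  | head hstep _ ih =>
    obtain ⟨M', hM, hS'⟩ := hS.step hstep
    obtain ⟨n, Φ, hred, hΦ⟩ := ih hS'
    rcases hM with hM | rfl
    · exact ⟨n, Φ, hM.trans hred, hΦ⟩
    · refine ⟨n + 1, Φ, ?_, hΦ⟩
      rw [Function.iterate_succ_apply']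
      exact hred.lift (app succ) fun _ _ => Red.appR

end NatTestState

theorem redStar_natTest_abort_iff {M : Tm} {o : Option ExnName} :
    RedStar (natTest M) (abort o) ↔
      ∃ n Φ, RedStar M ((app succ)^[n] Φ) ∧ (Φ = Tm.zero ∧ o = none ∨ Φ = abort o) := by
  refine ⟨(NatTestState.start M).redStar_abort, fun ⟨n, Φ, hM, hΦ⟩ => ?_⟩
  refine (Ctx.redStar_fill (.recd daimon kI .hole) hM).trans
    ((redStar_natTest_iterate_succ n Φ).tail (.head ?_))
  rcases hΦ with ⟨rfl, rfl⟩ | rfl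
  · exact .recZero _ _
  · cases o
    · exact .recDaimon _ _
    · exact .recRaise _ _ _

theorem tmI_corrupt_nat_general (ρ : ℕ → Set Ctx) (Δ : Finset ExnName) :
    TmI (Ty.corrupt Δ Ty.nat) ρ =
      { M | ∃ (n : ℕ) (Φ : Tm),
          (Φ = Tm.zero ∨ Φ = Tm.daimon ∨ ∃ ε ∈ Δ, Φ = Tm.raise ε) ∧
          RedStar M ((Tm.app Tm.succ)^[n] Φ) } := by
  ext M
  have hPerp : M ∈ TmI (Ty.corrupt Δ Ty.nat) ρ ↔
      RedStar ((tryCtx Δ).fill (natTest M)) (abort none) := by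
    simp [TmI, orth, CtxI, liftS, Perp, Ctx.fill_comp, Ctx.fill, abort]
  rw [Set.mem_ofPred_eq, hPerp, redStar_tryCtx_fill_abort_iff]
  simp only [redStar_natTest_abort_iff, Option.filter_eq_none_iff]
  constructor
  · rintro ⟨o, ⟨n, Φ, hM, hΦ⟩, hΔ⟩
    refine ⟨n, Φ, ?_, hM⟩
    rcases hΦ with ⟨rfl, -⟩ | rfl
    · exact .inl rfl
    · cases o
      · exact .inr (.inl rfl)
      · exact .inr (.inr ⟨_, by simpa using hΔ _ rfl, rfl⟩)
  · rintro ⟨n, Φ, hΦ, hM⟩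
    rcases hΦ with rfl | rfl | ⟨ε, hε, rfl⟩
    · exact ⟨none, ⟨n, _, hM, .inl ⟨rfl, rfl⟩⟩, by simp⟩
    · exact ⟨none, ⟨n, abort none, hM, .inr rfl⟩, by simp⟩
    · exact ⟨some ε, ⟨n, abort (some ε), hM, .inr rfl⟩, by simpa⟩

/-- Characterization of the interpretation of corrupted `nat`:
`⟦{Δ}nat⟧ρ` is the set of terms reducing to `Sⁿ Φ` with `Φ` one of
`0`, `✠`, or `raise ε` for `ε ∈ Δ`. -/
theorem tmI_corrupt_nat (ρ : ℕ → Set Ctx) (hρ : ∀ i, (ρ i).Nonempty)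
    (Δ : Finset ExnName) :
    TmI (Ty.corrupt Δ Ty.nat) ρ =
      { M | ∃ (n : ℕ) (Φ : Tm),
          (Φ = Tm.zero ∨ Φ = Tm.daimon ∨ ∃ ε ∈ Δ, Φ = Tm.raise ε) ∧
          RedStar M ((Tm.app Tm.succ)^[n] Φ) } :=
  tmI_corrupt_nat_general ρ Δ
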